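/- arXiv:1910.06216 — 2 statements merged into one kernel-verified Lean document; each statement's English description precedes it below -/
import Mathlib

section
/- Let p > 3/2 and let f be a nonnegative function with f ∈ L^p(ℝ³) ∩ L¹(ℝ³) and with the moment of order 21(p−1)(p/2+3/4)/(p−3/2) bounded, i.e. ∫_{ℝ³} f(v) (1+|v|)^{21(p−1)(p/2+3/4)/(p−3/2)} dv < ∞. Then, with s = 3/4 + p/2 (which satisfies 3/2 < s < p), there exists a constant C, depending only on p, ‖f‖_{L^p}, ‖f‖_{L¹} and the above moment, such that for every cube Q ⊂ ℝ³ of side length r ∈ (0,1): |Q|^{1/3} ( (1/|Q|) ∫_Q (1+|v|)^{15s/2} f(v)^s dv )^{1/(2s)} ( (1/|Q|) ∫_Q (1+|v|)^{3s} dv )^{1/(2s)} ≤ C r^{1 − 3/(2s)}. In particular this left-hand side is bounded by a modulus of continuity η(r) = C r^{1−3/(2s)}. -/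
open MeasureTheory Real

noncomputable section

abbrev E3 : Type := EuclideanSpace ℝ (Fin 3)

def cube (c : E3) (r : ℝ) : Set E3 := {v | ∀ i, c i ≤ v i ∧ v i ≤ c i + r}

/-!
Write `w v = 1 + ‖v‖`. Weighted AM–GM with weight `θ = (p - s)/(p - 1)` interpolates between
the moment bound and `f ∈ Lᵖ`: `w^{21s/2} f^s ≤ θ f w^m + (1 - θ) fᵖ`, where the moment order `m`
is exactly the one with `m θ = 21s/2`. On a cube `Q` of side `r < 1` the weight is comparable to
the constant `3 + ‖c‖`, so `∫_Q w^{15s/2} fˢ · ∫_Q w^{3s} ≤ 5^{3s} |Q| ∫ w^{21s/2} fˢ`; dividing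
by `|Q|² = r⁶` and taking the power `1/(2s)` leaves `r · r^{-3/(2s)}`.
-/

namespace MeasureTheory

variable {α : Type*} [MeasurableSpace α] {μ : Measure α}

theorem Integrable.rpow_mul_rpow_one_sub {F G : α → ℝ} (hF : Integrable F μ)
    (hG : Integrable G μ) (hF0 : ∀ x, 0 ≤ F x) (hG0 : ∀ x, 0 ≤ G x) {θ : ℝ} (hθ0 : 0 ≤ θ)
    (hθ1 : θ ≤ 1) : Integrable (fun x => F x ^ θ * G x ^ (1 - θ)) μ := by
  refine (hF.add hG).mono
    ((hF.aemeasurable.pow_const θ).mul (hG.aemeasurable.pow_const _)).aestronglyMeasurable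
    (Filter.Eventually.of_forall fun x => ?_)
  have hFx := hF0 x
  have hGx := hG0 x
  rw [norm_of_nonneg (by positivity), Pi.add_apply, norm_of_nonneg (by positivity)]
  calc F x ^ θ * G x ^ (1 - θ) ≤ θ * F x + (1 - θ) * G x :=
        geom_mean_le_arith_mean2_weighted hθ0 (by linarith) hFx hGx (by ring)
    _ ≤ F x + G x := by nlinarith

theorem Integrable.rpow_mul_rpow_of_moment {f w : α → ℝ} (hf0 : ∀ x, 0 ≤ f x)
    (hw0 : ∀ x, 0 ≤ w x) {a p s : ℝ} (hs : 1 < s) (hsp : s < p)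
    (hmom : Integrable (fun x => f x * w x ^ (a * (p - 1) / (p - s))) μ)
    (hfp : Integrable (fun x => f x ^ p) μ) :
    Integrable (fun x => w x ^ a * f x ^ s) μ := by
  have hp1 : p - 1 ≠ 0 := by linarith
  have hps : p - s ≠ 0 := by linarith
  have hθ0 : 0 ≤ (p - s) / (p - 1) := div_nonneg (by linarith) (by linarith)
  have hθ1 : (p - s) / (p - 1) ≤ 1 := (div_le_one (by linarith)).2 (by linarith)
  have hwθ : a * (p - 1) / (p - s) * ((p - s) / (p - 1)) = a := by field_simp
  have hfθ : (p - s) / (p - 1) + p * (1 - (p - s) / (p - 1)) = s := by field_simp; ring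
  refine (hmom.rpow_mul_rpow_one_sub hfp (fun x => mul_nonneg (hf0 x) (rpow_nonneg (hw0 x) _))
    (fun x => rpow_nonneg (hf0 x) p) hθ0 hθ1).congr (ae_of_all _ fun x => ?_)
  dsimp only
  rw [mul_rpow (hf0 x) (rpow_nonneg (hw0 x) _), ← rpow_mul (hw0 x), ← rpow_mul (hf0 x), hwθ,
    mul_comm (f x ^ _), mul_assoc, ← rpow_add' (hf0 x) (by linarith), hfθ]

theorem MemLp.integrable_rpow_of_nonneg {f : α → ℝ} (hf0 : ∀ x, 0 ≤ f x) {p : ℝ} (hp : 0 < p)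
    (hf : MemLp f (ENNReal.ofReal p) μ) : Integrable (fun x => f x ^ p) μ := by
  have := hf.integrable_norm_rpow (by simpa using hp) ENNReal.ofReal_ne_top
  simpa [ENNReal.toReal_ofReal hp.le, norm_of_nonneg (hf0 _)] using this

theorem setIntegral_mul_setIntegral_rpow_le {Q : Set α} (hQ : MeasurableSet Q) (hμQ : μ Q < ⊤)
    {w h : α → ℝ} {T k β : ℝ} (hT : 0 ≤ T) (hk : 0 ≤ k) (hβ : 0 ≤ β)
    (hw0 : ∀ x ∈ Q, 0 ≤ w x) (hwT : ∀ x ∈ Q, w x ≤ T) (hTw : ∀ x ∈ Q, T ≤ k * w x)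
    (hh : ∀ x ∈ Q, 0 ≤ h x) (hint : IntegrableOn (fun x => w x ^ β * h x) Q μ) :
    (∫ x in Q, h x ∂μ) * ∫ x in Q, w x ^ β ∂μ
      ≤ k ^ β * (∫ x in Q, w x ^ β * h x ∂μ) * μ.real Q := by
  have hwβ : ∫ x in Q, w x ^ β ∂μ ≤ T ^ β * μ.real Q := by
    refine (Real.le_norm_self _).trans (norm_setIntegral_le_of_norm_le_const hμQ fun x hx => ?_)
    rw [norm_of_nonneg (rpow_nonneg (hw0 x hx) β)]
    exact rpow_le_rpow (hw0 x hx) (hwT x hx) hβ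
  have hTh : T ^ β * ∫ x in Q, h x ∂μ ≤ k ^ β * ∫ x in Q, w x ^ β * h x ∂μ := by
    rw [← integral_const_mul, ← integral_const_mul]
    refine integral_mono_of_nonneg (ae_restrict_of_forall_mem hQ fun x hx => ?_)
      (hint.const_mul _) (ae_restrict_of_forall_mem hQ fun x hx => ?_)
    · exact mul_nonneg (rpow_nonneg hT β) (hh x hx)
    · dsimp only
      rw [← mul_assoc, ← mul_rpow hk (hw0 x hx)]
      exact mul_le_mul_of_nonneg_right (rpow_le_rpow hT (hTw x hx) hβ) (hh x hx)
  calc (∫ x in Q, h x ∂μ) * ∫ x in Q, w x ^ β ∂μ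
      ≤ (∫ x in Q, h x ∂μ) * (T ^ β * μ.real Q) :=
        mul_le_mul_of_nonneg_left hwβ (setIntegral_nonneg hQ hh)
    _ = (T ^ β * ∫ x in Q, h x ∂μ) * μ.real Q := by ring
    _ ≤ k ^ β * (∫ x in Q, w x ^ β * h x ∂μ) * μ.real Q :=
        mul_le_mul_of_nonneg_right hTh measureReal_nonneg

end MeasureTheory

theorem cube_average_rpow_mul_le {r X Y A e : ℝ} (hr : 0 < r) (hX : 0 ≤ X) (hY : 0 ≤ Y)
    (he : 0 ≤ e) (hXY : X * Y ≤ A * r ^ 3) :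
    (r ^ 3) ^ ((1 : ℝ) / 3) * ((1 / r ^ 3) * X) ^ e * ((1 / r ^ 3) * Y) ^ e
      ≤ A ^ e * r ^ (1 - 3 * e) := by
  have hr3 : (r ^ 3 : ℝ) = r ^ (3 : ℝ) := by norm_cast
  have hA : 0 ≤ A := nonneg_of_mul_nonneg_left ((mul_nonneg hX hY).trans hXY) (by positivity)
  have hprod : (1 / r ^ 3) * X * ((1 / r ^ 3) * Y) ≤ A / r ^ 3 :=
    calc (1 / r ^ 3) * X * ((1 / r ^ 3) * Y) = X * Y / r ^ 3 / r ^ 3 := by ring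
      _ ≤ A * r ^ 3 / r ^ 3 / r ^ 3 := by gcongr
      _ = A / r ^ 3 := by field_simp
  calc (r ^ 3) ^ ((1 : ℝ) / 3) * ((1 / r ^ 3) * X) ^ e * ((1 / r ^ 3) * Y) ^ e
      = r * ((1 / r ^ 3) * X * ((1 / r ^ 3) * Y)) ^ e := by
        rw [mul_assoc, ← mul_rpow (by positivity) (by positivity), hr3, ← rpow_mul hr.le]
        norm_num
    _ ≤ r * (A / r ^ 3) ^ e := by gcongr
    _ = A ^ e * r ^ (1 - 3 * e) := by
        rw [div_rpow hA (by positivity), hr3, ← rpow_mul hr.le, rpow_sub hr, rpow_one]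
        ring

theorem cube_eq_preimage (c : E3) (r : ℝ) :
    cube c r = (MeasurableEquiv.toLp 2 (Fin 3 → ℝ)).symm ⁻¹'
      Set.univ.pi fun i => Set.Icc (c i) (c i + r) := by
  ext v
  simp only [cube, Set.mem_preimage, Set.mem_univ_pi, Set.mem_Icc]
  rfl

theorem measurableSet_cube (c : E3) (r : ℝ) : MeasurableSet (cube c r) := by
  rw [cube_eq_preimage]
  exact (MeasurableEquiv.toLp 2 (Fin 3 → ℝ)).symm.measurable
    (MeasurableSet.univ_pi fun _ => measurableSet_Icc)

theorem volume_cube (c : E3) {r : ℝ} (hr : 0 ≤ r) :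
    volume (cube c r) = ENNReal.ofReal (r ^ 3) := by
  rw [cube_eq_preimage,
    (EuclideanSpace.volume_preserving_symm_measurableEquiv_toLp (Fin 3)).measure_preimage
      (MeasurableSet.univ_pi fun _ => measurableSet_Icc).nullMeasurableSet,
    volume_pi_pi]
  simp [Real.volume_Icc, ← ENNReal.ofReal_pow hr]

theorem norm_sub_le_of_mem_cube {c v : E3} {r : ℝ} (hv : v ∈ cube c r) :
    ‖v - c‖ ≤ √3 * r := by
  have hr : 0 ≤ r := by linarith [hv 0]
  have hcoord : ∀ i, ‖(v - c) i‖ ^ 2 ≤ r ^ 2 := fun i => by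
    rw [PiLp.sub_apply, Real.norm_eq_abs, sq_abs]
    nlinarith [hv i]
  calc ‖v - c‖ ≤ √(∑ _i : Fin 3, r ^ 2) := by
        rw [EuclideanSpace.norm_eq]
        exact Real.sqrt_le_sqrt (Finset.sum_le_sum fun i _ => hcoord i)
    _ = √3 * r := by simp [Real.sqrt_mul, Real.sqrt_sq hr]

theorem one_add_norm_le_and_le_of_mem_cube {c v : E3} {r : ℝ} (hr : r ≤ 1)
    (hv : v ∈ cube c r) : 1 + ‖v‖ ≤ 3 + ‖c‖ ∧ 3 + ‖c‖ ≤ 5 * (1 + ‖v‖) := by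
  have h3 : √3 ≤ 2 := Real.sqrt_le_iff.2 ⟨by norm_num, by norm_num⟩
  have hvc : ‖v - c‖ ≤ 2 := by
    nlinarith [norm_sub_le_of_mem_cube hv, Real.sqrt_nonneg 3, norm_nonneg (v - c)]
  constructor <;> linarith [norm_sub_norm_le v c, norm_sub_rev v c, norm_sub_norm_le c v,
    norm_nonneg v]

theorem cube_condition_of_Lp_general
    (p : ℝ) (hp : 3/2 < p) (s : ℝ) (hs : s = 3/4 + p/2)
    (f : E3 → ℝ) (hnn : ∀ v, 0 ≤ f v)
    (hLp : MemLp f (ENNReal.ofReal p) (volume : Measure E3))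
    (hmom : Integrable
      (fun v : E3 => f v * (1 + ‖v‖) ^ (21 * (p - 1) * (p/2 + 3/4) / (p - 3/2)))) :
    (3/2 < s ∧ s < p) ∧
    ∃ C : ℝ, 0 ≤ C ∧ ∀ (c : E3) (r : ℝ), r ∈ Set.Ioo (0 : ℝ) 1 →
      (r ^ 3) ^ ((1 : ℝ)/3) *
          ((1 / r ^ 3) * ∫ v in cube c r, (1 + ‖v‖) ^ (15 * s / 2) * f v ^ s) ^ (1/(2*s)) *
          ((1 / r ^ 3) * ∫ v in cube c r, (1 + ‖v‖) ^ (3 * s)) ^ (1/(2*s))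
        ≤ C * r ^ (1 - 3/(2*s)) := by
  have hsp : 3/2 < s ∧ s < p := by constructor <;> linarith
  have hh0 : ∀ v : E3, 0 ≤ (1 + ‖v‖) ^ (15 * s / 2) * f v ^ s := fun v =>
    mul_nonneg (by positivity) (rpow_nonneg (hnn v) s)
  set W : E3 → ℝ := fun v => (1 + ‖v‖) ^ (3 * s) * ((1 + ‖v‖) ^ (15 * s / 2) * f v ^ s)
  have hW0 : ∀ v, 0 ≤ W v := fun v => mul_nonneg (by positivity) (hh0 v)
  have hW : Integrable W := by
    have hmom' : Integrable fun v : E3 => f v * (1 + ‖v‖) ^ (21 * s / 2 * (p - 1) / (p - s)) := by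
      convert hmom using 4
      rw [div_eq_div_iff (by linarith : p - s ≠ 0) (by linarith : p - 3/2 ≠ 0), hs]
      ring
    refine (hmom'.rpow_mul_rpow_of_moment hnn (fun v => by positivity) (by linarith) hsp.2
      (hLp.integrable_rpow_of_nonneg hnn (by linarith))).congr (ae_of_all _ fun v => ?_)
    simp only [W, ← mul_assoc, ← rpow_add (by positivity : (0 : ℝ) < 1 + ‖v‖)]
    ring_nf
  refine ⟨hsp, (5 ^ (3 * s) * ∫ v, W v) ^ (1 / (2 * s)),
    rpow_nonneg (mul_nonneg (by positivity) (integral_nonneg hW0)) _, ?_⟩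
  rintro c r ⟨hr0, hr1⟩
  have hQ := setIntegral_mul_setIntegral_rpow_le (measurableSet_cube c r)
    (by rw [volume_cube c hr0.le]; exact ENNReal.ofReal_lt_top) (T := 3 + ‖c‖) (k := 5)
    (by positivity) (by norm_num) (by linarith) (fun v _ => by positivity)
    (fun v hv => (one_add_norm_le_and_le_of_mem_cube hr1.le hv).1)
    (fun v hv => (one_add_norm_le_and_le_of_mem_cube hr1.le hv).2)
    (fun v _ => hh0 v) hW.integrableOn
  rw [measureReal_def, volume_cube c hr0.le, ENNReal.toReal_ofReal (by positivity)] at hQ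
  rw [show 3 / (2 * s) = 3 * (1 / (2 * s)) by ring]
  refine cube_average_rpow_mul_le hr0
    (setIntegral_nonneg (measurableSet_cube c r) fun v _ => hh0 v)
    (setIntegral_nonneg (measurableSet_cube c r) fun v _ => by positivity)
    (one_div_nonneg.2 (by linarith)) (hQ.trans ?_)
  gcongr 5 ^ (3 * s) * ?_ * _
  exact setIntegral_le_integral hW (ae_of_all _ hW0)

/-- **Verification of the cube condition** (Proposition 3.2): if `f ∈ L^p ∩ L¹(ℝ³)` for
some `p > 3/2` with moment of order `21(p−1)(p/2+3/4)/(p−3/2)` bounded, then with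
`s = 3/4 + p/2` (which satisfies `3/2 < s < p`) the weighted cube quantity is bounded by
`C r^{1 − 3/(2s)}` for every cube of side length `r ∈ (0,1)`. -/
theorem cube_condition_of_Lp
    (p : ℝ) (hp : 3/2 < p) (s : ℝ) (hs : s = 3/4 + p/2)
    (f : E3 → ℝ) (hnn : ∀ v, 0 ≤ f v) (hmeas : Measurable f)
    (hL1 : Integrable f)
    (hLp : MemLp f (ENNReal.ofReal p) (volume : Measure E3))
    (hmom : Integrable
      (fun v : E3 => f v * (1 + ‖v‖) ^ (21 * (p - 1) * (p/2 + 3/4) / (p - 3/2)))) :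
    (3/2 < s ∧ s < p) ∧
    ∃ C : ℝ, 0 ≤ C ∧ ∀ (c : E3) (r : ℝ), r ∈ Set.Ioo (0 : ℝ) 1 →
      (r ^ 3) ^ ((1 : ℝ)/3) *
          ((1 / r ^ 3) * ∫ v in cube c r, (1 + ‖v‖) ^ (15 * s / 2) * f v ^ s) ^ (1/(2*s)) *
          ((1 / r ^ 3) * ∫ v in cube c r, (1 + ‖v‖) ^ (3 * s)) ^ (1/(2*s))
        ≤ C * r ^ (1 - 3/(2*s)) :=
  cube_condition_of_Lp_general p hp s hs f hnn hLp hmom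

end
end

section
/- Let p > 3/2 and let f be a nonnegative function with f ∈ L¹(ℝ³) ∩ L^p(ℝ³) and ∫_{ℝ³} f(y) (1+|y|)^{3(p−1/2)(p−1)/(p−3/2)} dy < ∞. Then there exists a constant C, depending only on p, ‖f‖_{L^p}, ‖f‖_{L¹} and the above weighted integral, such that for all v ∈ ℝ³: a[f](v) = (1/(4π)) ∫_{ℝ³} f(w)/|v−w| dw ≤ C / (1+|v|). -/
open MeasureTheory Real

noncomputable section

/-- `a[f](v) = (1/(4π)) ∫ f(w)/|v−w| dw`, i.e. `a[f] = (−Δ)⁻¹ f`. -/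
noncomputable def aFun (f : E3 → ℝ) (v : E3) : ℝ :=
  (1 / (4 * π)) * ∫ w : E3, f w / ‖v - w‖

/-!
Split `∫ f(w)/|v-w| dw` into three regions. Near `v`, within a radius `r`, Hölder's inequality
bounds the contribution by `‖f‖_p` times the `L^q` norm of the truncated kernel, which scales like
`r^(3/q - 1)` and is finite because the conjugate exponent `q` is below `3` exactly when `p > 3/2`.
At intermediate distances (up to `(1+|v|)/2`) the kernel is at most `1/r`, and `1+|w|` is comparable
to `1+|v|`, so the weight gives `r⁻¹ (1+|v|)^(-s)`; far away the kernel is at most `2/(1+|v|)`.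
Taking `r = (1+|v|)^(-q/(3-q))` makes all three terms `O(1/(1+|v|))`, the middle one precisely
because the weight exponent `s` is at least `q/(3-q) + 1`.
-/

open Set Metric Module

section Kernel

variable {E : Type*} [NormedAddCommGroup E]

def truncInvNorm (r : ℝ) (x : E) : ℝ :=
  (closedBall (0 : E) r).indicator (fun x => ‖x‖⁻¹) x

lemma truncInvNorm_nonneg (r : ℝ) (x : E) : 0 ≤ truncInvNorm r x :=
  indicator_nonneg (fun _ _ => inv_nonneg.2 (norm_nonneg _)) x

lemma truncInvNorm_rpow {q : ℝ} (hq : q ≠ 0) (r : ℝ) (x : E) :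
    truncInvNorm r x ^ q = (closedBall (0 : E) r).indicator (fun x => ‖x‖⁻¹ ^ q) x := by
  by_cases hx : x ∈ closedBall (0 : E) r
  · simp [truncInvNorm, hx]
  · simp [truncInvNorm, hx, zero_rpow hq]

lemma truncInvNorm_eq_inv_mul_smul [NormedSpace ℝ E] {r : ℝ} (hr : 0 < r) (x : E) :
    truncInvNorm r x = r⁻¹ * truncInvNorm 1 (r⁻¹ • x) := by
  have hmem : x ∈ closedBall (0 : E) r ↔ r⁻¹ • x ∈ closedBall (0 : E) 1 := by
    simp only [mem_closedBall_zero_iff, norm_smul, norm_inv, Real.norm_of_nonneg hr.le]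
    rw [inv_mul_le_iff₀ hr, mul_one]
  by_cases hx : x ∈ closedBall (0 : E) r
  · simp only [truncInvNorm, indicator_of_mem hx, indicator_of_mem (hmem.1 hx), norm_smul,
      norm_inv, Real.norm_of_nonneg hr.le, mul_inv, inv_inv, inv_mul_cancel_left₀ hr.ne']
  · simp only [truncInvNorm, indicator_of_notMem hx, indicator_of_notMem (mt hmem.2 hx), mul_zero]

lemma inv_norm_sub_le_truncInvNorm_add {r s : ℝ} (hr : 0 < r) (hs : 0 ≤ s) (v w : E) :
    ‖v - w‖⁻¹ ≤ truncInvNorm r (v - w) + r⁻¹ * (2 / (1 + ‖v‖)) ^ s * (1 + ‖w‖) ^ s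
      + 2 / (1 + ‖v‖) := by
  have hK := truncInvNorm_nonneg r (v - w)
  have hv : 0 < 1 + ‖v‖ := by positivity
  have hmid : 0 ≤ r⁻¹ * (2 / (1 + ‖v‖)) ^ s * (1 + ‖w‖) ^ s := by positivity
  have hfar : 0 ≤ 2 / (1 + ‖v‖) := by positivity
  rcases le_or_gt ‖v - w‖ r with hnear | hr_lt
  · rw [truncInvNorm, indicator_of_mem (mem_closedBall_zero_iff.2 hnear)]
    linarith
  rcases le_or_gt ‖v - w‖ ((1 + ‖v‖) / 2) with hmid_le | hfar_lt
  · -- the triangle inequality gives `1 + ‖w‖ ≥ (1 + ‖v‖) / 2`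
    have hw : 1 ≤ 2 / (1 + ‖v‖) * (1 + ‖w‖) := by
      rw [div_mul_eq_mul_div, le_div_iff₀ hv]
      linarith [norm_sub_norm_le v w]
    have : ‖v - w‖⁻¹ ≤ r⁻¹ * (2 / (1 + ‖v‖)) ^ s * (1 + ‖w‖) ^ s := by
      rw [mul_assoc, ← mul_rpow (by positivity) (by positivity)]
      calc ‖v - w‖⁻¹ ≤ r⁻¹ := inv_anti₀ hr hr_lt.le
        _ ≤ r⁻¹ * (2 / (1 + ‖v‖) * (1 + ‖w‖)) ^ s :=
          le_mul_of_one_le_right (by positivity) (one_le_rpow hw hs)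
    linarith
  · have : ‖v - w‖⁻¹ ≤ 2 / (1 + ‖v‖) := by
      rw [← inv_div]; exact inv_anti₀ (by positivity) hfar_lt.le
    linarith

end Kernel

section Estimates

variable {E : Type*} [NormedAddCommGroup E] [NormedSpace ℝ E] [FiniteDimensional ℝ E]
  [MeasurableSpace E] [BorelSpace E] {μ : Measure E} [μ.IsAddHaarMeasure]

lemma integrable_truncInvNorm_rpow {q : ℝ} (hq0 : 0 < q) (hqd : q < finrank ℝ E) (r : ℝ) :
    Integrable (fun x => truncInvNorm r x ^ q) μ := by
  have hd : 1 ≤ finrank ℝ E := by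
    have : (0 : ℝ) < finrank ℝ E := hq0.trans hqd
    exact_mod_cast this
  simp_rw [truncInvNorm_rpow hq0.ne']
  rw [integrable_indicator_iff measurableSet_closedBall]
  refine (integrableOn_ball_of_norm_le_rpow (C := 1) (r := r + 1) hd hqd ?_ ?_).mono_set
    (closedBall_subset_ball (by linarith))
  · filter_upwards with x
    rw [norm_of_nonneg (by positivity), one_mul, inv_rpow (norm_nonneg _), rpow_neg (norm_nonneg _)]
  · exact (measurable_norm.inv.pow_const q).aestronglyMeasurable

lemma memLp_truncInvNorm {q : ℝ} (hq0 : 0 < q) (hqd : q < finrank ℝ E) (r : ℝ) :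
    MemLp (truncInvNorm r) (ENNReal.ofReal q) μ := by
  have hmeas : Measurable (truncInvNorm (E := E) r) :=
    measurable_norm.inv.indicator measurableSet_closedBall
  rw [← integrable_norm_rpow_iff hmeas.aestronglyMeasurable (by simpa using hq0)
    ENNReal.ofReal_ne_top, ENNReal.toReal_ofReal hq0.le]
  simpa only [norm_of_nonneg (truncInvNorm_nonneg _ _)] using
    integrable_truncInvNorm_rpow hq0 hqd r

lemma integral_truncInvNorm_rpow {q r : ℝ} (hr : 0 < r) :
    ∫ x, truncInvNorm r x ^ q ∂μ =
      r ^ ((finrank ℝ E : ℝ) - q) * ∫ x, truncInvNorm 1 x ^ q ∂μ := by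
  simp_rw [truncInvNorm_eq_inv_mul_smul hr,
    mul_rpow (inv_nonneg.2 hr.le) (truncInvNorm_nonneg _ _)]
  rw [integral_const_mul,
    Measure.integral_comp_inv_smul_of_nonneg μ (fun x => truncInvNorm 1 x ^ q) hr.le, smul_eq_mul,
    ← mul_assoc, inv_rpow hr.le, rpow_sub hr, rpow_natCast]
  ring

lemma integral_mul_comp_sub_le {p q : ℝ} (hpq : p.HolderConjugate q) {f g : E → ℝ}
    (hf0 : ∀ x, 0 ≤ f x) (hg0 : ∀ x, 0 ≤ g x) (hf : MemLp f (ENNReal.ofReal p) μ)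
    (hg : MemLp g (ENNReal.ofReal q) μ) (v : E) :
    ∫ w, f w * g (v - w) ∂μ ≤ (∫ w, f w ^ p ∂μ) ^ (1 / p) * (∫ x, g x ^ q ∂μ) ^ (1 / q) := by
  have := integral_mul_le_Lp_mul_Lq_of_nonneg hpq (.of_forall hf0) (.of_forall fun w => hg0 (v - w))
    hf (hg.comp_measurePreserving (Measure.measurePreserving_sub_left μ v))
  rwa [integral_sub_left_eq_self (fun x => g x ^ q) μ v] at this

lemma integrable_mul_comp_sub {p q : ℝ} (hpq : p.HolderConjugate q) {f g : E → ℝ}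
    (hf : MemLp f (ENNReal.ofReal p) μ) (hg : MemLp g (ENNReal.ofReal q) μ) (v : E) :
    Integrable (fun w => f w * g (v - w)) μ := by
  have := hpq.ennrealOfReal
  rw [← memLp_one_iff_integrable]
  exact (hg.comp_measurePreserving (Measure.measurePreserving_sub_left μ v)).mul hf

lemma integral_div_norm_sub_le {p q r s : ℝ} (hpq : p.HolderConjugate q) (hqd : q < finrank ℝ E)
    (hr : 0 < r) (hs : 0 ≤ s) {f : E → ℝ} (hf0 : ∀ w, 0 ≤ f w) (hf : Integrable f μ)
    (hfp : MemLp f (ENNReal.ofReal p) μ) (hfs : Integrable (fun w => f w * (1 + ‖w‖) ^ s) μ)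
    (v : E) :
    ∫ w, f w / ‖v - w‖ ∂μ ≤
      (∫ w, f w ^ p ∂μ) ^ (1 / p) * (∫ x, truncInvNorm r x ^ q ∂μ) ^ (1 / q)
        + r⁻¹ * (2 / (1 + ‖v‖)) ^ s * ∫ w, f w * (1 + ‖w‖) ^ s ∂μ
        + 2 / (1 + ‖v‖) * ∫ w, f w ∂μ := by
  have hK := memLp_truncInvNorm (μ := μ) hpq.symm.pos hqd r
  have hnear := integrable_mul_comp_sub hpq hfp hK v
  calc ∫ w, f w / ‖v - w‖ ∂μ
      ≤ ∫ w, (f w * truncInvNorm r (v - w) + r⁻¹ * (2 / (1 + ‖v‖)) ^ s * (f w * (1 + ‖w‖) ^ s)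
          + 2 / (1 + ‖v‖) * f w) ∂μ := by
        refine integral_mono_of_nonneg (.of_forall fun w => div_nonneg (hf0 w) (norm_nonneg _))
          ((hnear.add (hfs.const_mul _)).add (hf.const_mul _)) (.of_forall fun w => ?_)
        have := mul_le_mul_of_nonneg_left (inv_norm_sub_le_truncInvNorm_add hr hs v w) (hf0 w)
        dsimp only
        rw [div_eq_mul_inv]
        linarith
    _ = ∫ w, f w * truncInvNorm r (v - w) ∂μ
          + r⁻¹ * (2 / (1 + ‖v‖)) ^ s * ∫ w, f w * (1 + ‖w‖) ^ s ∂μ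
          + 2 / (1 + ‖v‖) * ∫ w, f w ∂μ := by
        rw [integral_add, integral_add, integral_const_mul, integral_const_mul]
        exacts [hnear, hfs.const_mul _, hnear.add (hfs.const_mul _), hf.const_mul _]
    _ ≤ _ := by
        gcongr
        exact integral_mul_comp_sub_le hpq hf0 (truncInvNorm_nonneg r) hfp hK v

lemma integral_div_norm_sub_le_div_one_add_norm {p q s M1 Mp Mq : ℝ} (hpq : p.HolderConjugate q)
    (hqd : q < finrank ℝ E) (hs : ((finrank ℝ E : ℝ) / q - 1)⁻¹ + 1 ≤ s) {f : E → ℝ}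
    (hf0 : ∀ w, 0 ≤ f w) (hf : Integrable f μ) (hfp : MemLp f (ENNReal.ofReal p) μ)
    (hMp : (eLpNorm f (ENNReal.ofReal p) μ).toReal ≤ Mp) (hM1 : ∫ w, f w ∂μ ≤ M1)
    (hfs : Integrable (fun w => f w * (1 + ‖w‖) ^ s) μ) (hMq : ∫ w, f w * (1 + ‖w‖) ^ s ∂μ ≤ Mq)
    (v : E) :
    ∫ w, f w / ‖v - w‖ ∂μ ≤
      (Mp * (∫ x, truncInvNorm 1 x ^ q ∂μ) ^ (1 / q) + 2 ^ s * Mq + 2 * M1) / (1 + ‖v‖) := by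
  set α : ℝ := (finrank ℝ E : ℝ) / q - 1
  have hq0 : 0 < q := hpq.symm.pos
  have hα : 0 < α := by rw [sub_pos, one_lt_div hq0]; exact hqd
  have hs0 : 0 ≤ s := by linarith [inv_pos.2 hα]
  have hv : 0 < 1 + ‖v‖ := by positivity
  set r := (1 + ‖v‖) ^ (-α⁻¹)
  have hr : 0 < r := rpow_pos_of_pos hv _
  have hLp : (∫ w, f w ^ p ∂μ) ^ (1 / p) = (eLpNorm f (ENNReal.ofReal p) μ).toReal := by
    rw [toReal_eLpNorm hfp.1, lpNorm_eq_integral_norm_rpow_toReal (by simpa using hpq.pos)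
      ENNReal.ofReal_ne_top hfp.1, ENNReal.toReal_ofReal hpq.nonneg, one_div]
    simp only [norm_of_nonneg (hf0 _)]
  have hc : 0 ≤ ∫ x, truncInvNorm 1 x ^ q ∂μ :=
    integral_nonneg fun _ => rpow_nonneg (truncInvNorm_nonneg _ _) _
  have hnear : (∫ x, truncInvNorm r x ^ q ∂μ) ^ (1 / q) =
      (1 + ‖v‖)⁻¹ * (∫ x, truncInvNorm 1 x ^ q ∂μ) ^ (1 / q) := by
    rw [integral_truncInvNorm_rpow hr, mul_rpow (by positivity) hc, ← rpow_mul hr.le,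
      ← rpow_mul hv.le]
    have hexp : (finrank ℝ E - q) * (1 / q) = α := by simp only [α]; field_simp
    rw [hexp, neg_mul, inv_mul_cancel₀ hα.ne', rpow_neg_one]
  have hmid : r⁻¹ * (2 / (1 + ‖v‖)) ^ s ≤ 2 ^ s * (1 + ‖v‖)⁻¹ := by
    rw [← rpow_neg hv.le, neg_neg, div_rpow zero_le_two hv.le, mul_div_left_comm, ← rpow_sub hv,
      ← rpow_neg_one (1 + ‖v‖)]
    gcongr
    · exact le_add_of_nonneg_right (norm_nonneg v)
    · linarith
  have hMq0 : 0 ≤ ∫ w, f w * (1 + ‖w‖) ^ s ∂μ :=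
    integral_nonneg fun w => mul_nonneg (hf0 w) (by positivity)
  calc ∫ w, f w / ‖v - w‖ ∂μ
      ≤ (∫ w, f w ^ p ∂μ) ^ (1 / p) * (∫ x, truncInvNorm r x ^ q ∂μ) ^ (1 / q)
        + r⁻¹ * (2 / (1 + ‖v‖)) ^ s * ∫ w, f w * (1 + ‖w‖) ^ s ∂μ
        + 2 / (1 + ‖v‖) * ∫ w, f w ∂μ := integral_div_norm_sub_le hpq hqd hr hs0 hf0 hf hfp hfs v
    _ ≤ Mp * ((1 + ‖v‖)⁻¹ * (∫ x, truncInvNorm 1 x ^ q ∂μ) ^ (1 / q))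
        + 2 ^ s * (1 + ‖v‖)⁻¹ * Mq + 2 / (1 + ‖v‖) * M1 := by
      rw [hLp, hnear]
      gcongr
    _ = _ := by ring

end Estimates

/-- **Decay of `a[f]`** (inequality (4.2)): for `p > 3/2` there is `C` depending only on
`p`, `‖f‖_{L^p}`, `‖f‖_{L¹}` and the weighted integral
`∫ f (1+|y|)^{3(p−1/2)(p−1)/(p−3/2)} dy`, such that `a[f](v) ≤ C/(1+|v|)`. -/
theorem aFun_decay
    (p : ℝ) (hp : 3/2 < p) (M1 Mp Mq : ℝ) :
    ∃ C : ℝ, ∀ f : E3 → ℝ, (∀ v, 0 ≤ f v) → Integrable f →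
      MemLp f (ENNReal.ofReal p) (volume : Measure E3) →
      (eLpNorm f (ENNReal.ofReal p) volume).toReal ≤ Mp →
      (∫ v : E3, f v) ≤ M1 →
      Integrable
        (fun y : E3 => f y * (1 + ‖y‖) ^ (3 * (p - 1/2) * (p - 1) / (p - 3/2))) →
      (∫ y : E3, f y * (1 + ‖y‖) ^ (3 * (p - 1/2) * (p - 1) / (p - 3/2))) ≤ Mq →
      ∀ v : E3, aFun f v ≤ C / (1 + ‖v‖) := by
  set s := 3 * (p - 1/2) * (p - 1) / (p - 3/2)
  set q := p / (p - 1)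
  have hpq : p.HolderConjugate q :=
    (Real.holderConjugate_iff_eq_conjExponent (by linarith)).2 rfl
  have hd : (finrank ℝ E3 : ℝ) = 3 := by simp
  have hq3 : q < finrank ℝ E3 := by
    rw [hd, div_lt_iff₀ (by linarith)]; linarith
  have hs : ((finrank ℝ E3 : ℝ) / q - 1)⁻¹ + 1 ≤ s := by
    have h3q : 3 / q - 1 = (2 * p - 3) / p := by
      simp only [q]; field_simp; ring
    rw [hd, h3q, inv_div, div_add_one (by linarith), div_le_div_iff₀ (by linarith) (by linarith)]
    have h1 : 0 < p - 1 := by linarith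
    have h2 : 0 < p - 3 / 2 := by linarith
    nlinarith [mul_pos (mul_pos h1 h1) h2]
  refine ⟨(Mp * (∫ x : E3, truncInvNorm 1 x ^ q) ^ (1 / q) + 2 ^ s * Mq + 2 * M1) / (4 * π),
    fun f hf0 hf hfp hMp hM1 hfs hMq v => ?_⟩
  calc aFun f v = (1 / (4 * π)) * ∫ w, f w / ‖v - w‖ := rfl
    _ ≤ (1 / (4 * π)) *
        ((Mp * (∫ x : E3, truncInvNorm 1 x ^ q) ^ (1 / q) + 2 ^ s * Mq + 2 * M1) / (1 + ‖v‖)) := by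
      gcongr
      exact integral_div_norm_sub_le_div_one_add_norm hpq hq3 hs hf0 hf hfp hMp hM1 hfs hMq v
    _ = _ := by ring

end
end
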